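/- Let F be a nonzero polynomial in F[X_1,...,X_m] with leading monomial X_1^{i_1}···X_m^{i_m} with respect to a lexicographic ordering, and let r ≥ 1. Then the number of points in S_1 × ... × S_m at which F has multiplicity at least r is at most (i_1 s_2···s_m + s_1 i_2 s_3···s_m + ... + s_1···s_{m−1} i_m)/r. -/

import Mathlib

/-!
Every point of the grid is counted with its multiplicity: `r` times the number of points of
multiplicity `≥ r` is at most `∑_{a ∈ S_1 × ⋯ × S_m} mult(F, a)` (multiplicities are finite, as
`∂^I F` is the nonzero constant `coeff_I F`), and this sum is bounded by induction on `m`.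
Write `F = ∑_j f_j(X_2, …, X_m) X_1^j`; then `f := f_{i_1}` has lex-leading exponent
`(i_2, …, i_m)`. Fix `a' ∈ S_2 × ⋯ × S_m` and a Hasse derivative `∂^k` in the last `m - 1`
variables of order `|k| = mult(f, a')` with `∂^k f (a') ≠ 0`. Restricting `∂^{(0,k)} F` to the
line `{(b, a')}` gives a univariate polynomial `g ≠ 0` (its `i_1`-th coefficient is `∂^k f (a')`)
of degree `≤ i_1` (the exponent of `X_1` is maximal at the lex-leading monomial), and
`mult(F, (b, a')) ≤ |k| + ord_b g`. Summing over `b ∈ S_1` gives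
`∑_b mult(F, (b, a')) ≤ s_1 · mult(f, a') + i_1`, and the induction hypothesis for `f` closes the
argument.
-/

open MvPolynomial

/-- The `k`-th Hasse derivative of a multivariate polynomial `F`: the coefficient of
`Z^k` in `F(X+Z)`, given by `F^{(k)} = ∑_d ∏_i C(d_i, k_i) · coeff_d(F) · X^{d−k}`. -/
noncomputable def mvHasseDeriv {σ K : Type*} [CommRing K] [DecidableEq σ]
    (k : σ →₀ ℕ) (F : MvPolynomial σ K) : MvPolynomial σ K :=
  ∑ d ∈ F.support,
    MvPolynomial.monomial (d - k)
      ((∏ i ∈ k.support, Nat.choose (d i) (k i) : ℕ) • F.coeff d)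

/-- `multGE F a M` means that the multiplicity of `F` at the point `a` is at least `M`,
i.e. all Hasse derivatives of order `< M` vanish at `a`. -/
def multGE {σ K : Type*} [CommRing K] [DecidableEq σ]
    (F : MvPolynomial σ K) (a : σ → K) (M : ℕ) : Prop :=
  ∀ k : σ →₀ ℕ, (k.sum fun _ n => n) < M → MvPolynomial.eval a (mvHasseDeriv k F) = 0

/-- The multiplicity of `F` at `a`: the largest `M` such that all Hasse derivatives of
order `< M` vanish at `a` (junk value `0` for the zero polynomial, whose multiplicity
is infinite). -/
noncomputable def multAt {σ K : Type*} [CommRing K] [DecidableEq σ]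
    (F : MvPolynomial σ K) (a : σ → K) : ℕ :=
  sSup {M | multGE F a M}

open Finset Classical

section HasseDerivative

lemma Finsupp.prod_choose_eq_zero_of_not_le {σ : Type*} {k d : σ →₀ ℕ} (h : ¬ k ≤ d) :
    ∏ i ∈ k.support, (d i).choose (k i) = 0 := by
  obtain ⟨i, hi⟩ : ∃ i, d i < k i := by simpa [Finsupp.le_def] using h
  exact prod_eq_zero (Finsupp.mem_support_iff.mpr (by omega)) (Nat.choose_eq_zero_of_lt hi)

variable {σ R : Type*} [CommRing R] [DecidableEq σ]

lemma coeff_mvHasseDeriv_of_support_subset {k : σ →₀ ℕ} {s : Finset σ} (hs : k.support ⊆ s)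
    (F : MvPolynomial σ R) (e : σ →₀ ℕ) :
    coeff e (mvHasseDeriv k F) = (∏ i ∈ s, (e i + k i).choose (k i)) • coeff (e + k) F := by
  have hterm : ∀ d, coeff e (monomial (d - k) ((∏ i ∈ k.support, (d i).choose (k i)) • F.coeff d))
      = if e + k = d then (∏ i ∈ k.support, (d i).choose (k i)) • F.coeff d else 0 := by
    intro d
    rw [coeff_monomial]
    by_cases hkd : k ≤ d
    · have : d - k = e ↔ e + k = d :=
        ⟨fun h => h ▸ tsub_add_cancel_of_le hkd, fun h => h ▸ add_tsub_cancel_right e k⟩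
      simp only [this]
    · rw [Finsupp.prod_choose_eq_zero_of_not_le hkd, zero_smul, ite_self, ite_self]
  have hprod : ∏ i ∈ k.support, ((e + k) i).choose (k i) = ∏ i ∈ s, (e i + k i).choose (k i) :=
    prod_subset hs fun i _ hi => by simp [Finsupp.notMem_support_iff.mp hi]
  rw [mvHasseDeriv, coeff_sum]
  simp_rw [hterm]
  rw [sum_ite_eq, hprod]
  split_ifs with h
  · rfl
  · rw [MvPolynomial.notMem_support_iff.mp h, smul_zero]

lemma coeff_mvHasseDeriv (k : σ →₀ ℕ) (F : MvPolynomial σ R) (e : σ →₀ ℕ) :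
    coeff e (mvHasseDeriv k F) = (∏ i ∈ k.support, (e i + k i).choose (k i)) • coeff (e + k) F :=
  coeff_mvHasseDeriv_of_support_subset subset_rfl F e

lemma Nat.choose_add_mul_choose_add (e k l : ℕ) :
    (e + l).choose l * (e + l + k).choose k = (k + l).choose k * (e + (k + l)).choose (k + l) := by
  have h := Nat.choose_mul (n := e + (k + l)) (k := k + l) (s := k) (by omega)
  rw [show e + (k + l) - k = e + l by omega, show k + l - k = l by omega] at h
  rw [show e + l + k = e + (k + l) by omega, mul_comm, ← h, mul_comm]

lemma mvHasseDeriv_mvHasseDeriv (k l : σ →₀ ℕ) (F : MvPolynomial σ R) :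
    mvHasseDeriv l (mvHasseDeriv k F) =
      (∏ i ∈ (k + l).support, (k i + l i).choose (k i)) • mvHasseDeriv (k + l) F := by
  have hk : k.support ⊆ k.support ∪ l.support := subset_union_left
  have hl : l.support ⊆ k.support ∪ l.support := subset_union_right
  have hkl : (k + l).support ⊆ k.support ∪ l.support := Finsupp.support_add
  have hprod : ∏ i ∈ (k + l).support, (k i + l i).choose (k i)
      = ∏ i ∈ k.support ∪ l.support, (k i + l i).choose (k i) :=
    prod_subset hkl fun i _ hi => by
      simp [show k i = 0 ∧ l i = 0 by simpa using Finsupp.notMem_support_iff.mp hi]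
  ext e
  rw [coeff_smul, coeff_mvHasseDeriv_of_support_subset hl, coeff_mvHasseDeriv_of_support_subset hk,
    coeff_mvHasseDeriv_of_support_subset hkl, smul_smul, smul_smul, hprod, ← prod_mul_distrib,
    ← prod_mul_distrib, add_assoc, add_comm l k]
  congr 1
  refine prod_congr rfl fun i _ => ?_
  simpa [add_comm (l i)] using Nat.choose_add_mul_choose_add (e i) (k i) (l i)

lemma degreeOf_mvHasseDeriv_le (i : σ) (k : σ →₀ ℕ) (F : MvPolynomial σ R) :
    degreeOf i (mvHasseDeriv k F) ≤ degreeOf i F := by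
  refine degreeOf_le_iff.mpr fun e he => ?_
  rw [mem_support_iff, coeff_mvHasseDeriv] at he
  have hmem : e + k ∈ F.support := mem_support_iff.mpr fun h => he (by rw [h, smul_zero])
  exact (Nat.le_add_right (e i) (k i)).trans (monomial_le_degreeOf i hmem)

end HasseDerivative

section Multiplicity

variable {σ R : Type*} [CommRing R] [DecidableEq σ] {F : MvPolynomial σ R} {a : σ → R} {M N : ℕ}

lemma multGE_zero (F : MvPolynomial σ R) (a : σ → R) : multGE F a 0 :=
  fun _ hk => absurd hk (Nat.not_lt_zero _)

lemma multGE.mono (h : multGE F a M) (hNM : N ≤ M) : multGE F a N :=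
  fun k hk => h k (hk.trans_le hNM)

lemma multGE.mvHasseDeriv (h : multGE F a M) (k : σ →₀ ℕ) :
    multGE (mvHasseDeriv k F) a (M - k.degree) := by
  intro l hl
  change l.degree < M - k.degree at hl
  have hkl : (k + l).degree < M := by
    rw [map_add]
    omega
  rw [mvHasseDeriv_mvHasseDeriv, map_nsmul, h (k + l) hkl, smul_zero]

lemma multGE_multAt (hbdd : BddAbove {M | multGE F a M}) : multGE F a (multAt F a) :=
  Nat.sSup_mem ⟨0, multGE_zero F a⟩ hbdd

lemma multGE_iff_le_multAt (hbdd : BddAbove {M | multGE F a M}) :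
    multGE F a M ↔ M ≤ multAt F a :=
  ⟨fun h => le_csSup hbdd h, (multGE_multAt hbdd).mono⟩

lemma card_filter_multGE_mul_le_sum_multAt (s : Finset (σ → R))
    (hbdd : ∀ a ∈ s, BddAbove {M | multGE F a M}) (r : ℕ) :
    #(s.filter fun a => multGE F a r) * r ≤ ∑ a ∈ s, multAt F a :=
  calc #(s.filter fun a => multGE F a r) * r
      = ∑ _a ∈ s.filter fun a => multGE F a r, r := by rw [sum_const, smul_eq_mul]
    _ ≤ ∑ a ∈ s.filter fun a => multGE F a r, multAt F a := sum_le_sum fun a ha =>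
        (multGE_iff_le_multAt (hbdd a (mem_filter.mp ha).1)).mp (mem_filter.mp ha).2
    _ ≤ ∑ a ∈ s, multAt F a := sum_le_sum_of_subset (filter_subset _ _)

lemma exists_degree_le_multAt_eval_mvHasseDeriv_ne_zero (hbdd : BddAbove {M | multGE F a M}) :
    ∃ k : σ →₀ ℕ, k.degree ≤ multAt F a ∧ eval a (mvHasseDeriv k F) ≠ 0 := by
  have hnot : ¬ multGE F a (multAt F a + 1) := by
    rw [multGE_iff_le_multAt hbdd]
    omega
  simp only [multGE, not_forall] at hnot
  obtain ⟨k, hk, hne⟩ := hnot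
  exact ⟨k, Nat.lt_succ_iff.mp hk, hne⟩

variable [LinearOrder σ] {I : σ →₀ ℕ}

lemma mvHasseDeriv_eq_C_of_toLex_le (hlead : ∀ d ∈ F.support, toLex d ≤ toLex I) :
    mvHasseDeriv I F = C (coeff I F) := by
  ext e
  rw [coeff_mvHasseDeriv, coeff_C]
  rcases eq_or_ne e 0 with rfl | he
  · simp
  · have hnotMem : e + I ∉ F.support := fun hmem =>
      he <| add_eq_right.mp <| toLex.injective <|
        (hlead _ hmem).antisymm (Finsupp.toLex_monotone le_add_self)
    rw [if_neg (Ne.symm he), MvPolynomial.notMem_support_iff.mp hnotMem, smul_zero]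

lemma multGE.le_degree_of_toLex_le (h : multGE F a M) (hcoeff : coeff I F ≠ 0)
    (hlead : ∀ d ∈ F.support, toLex d ≤ toLex I) : M ≤ I.degree := by
  by_contra! hlt
  have := h I hlt
  rw [mvHasseDeriv_eq_C_of_toLex_le hlead, eval_C] at this
  exact hcoeff this

lemma bddAbove_multGE_of_toLex_le (hcoeff : coeff I F ≠ 0)
    (hlead : ∀ d ∈ F.support, toLex d ≤ toLex I) : BddAbove {M | multGE F a M} :=
  ⟨I.degree, fun _ h => h.le_degree_of_toLex_le hcoeff hlead⟩

end Multiplicity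

namespace Polynomial

variable {R : Type*} [CommRing R]

lemma hasseDeriv_map {S : Type*} [CommRing S] (φ : R →+* S) (j : ℕ) (p : R[X]) :
    (hasseDeriv j p).map φ = hasseDeriv j (p.map φ) := by
  ext t
  simp [hasseDeriv_coeff, coeff_map]

lemma le_rootMultiplicity_of_eval_hasseDeriv_eq_zero {p : R[X]} (hp : p ≠ 0) {b : R} {N : ℕ}
    (h : ∀ d < N, (hasseDeriv d p).eval b = 0) : N ≤ p.rootMultiplicity b := by
  rw [rootMultiplicity_eq_natTrailingDegree, ← taylor_apply]
  exact le_natTrailingDegree ((taylor_eq_zero b p).not.mpr hp) fun d hd => by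
    rw [taylor_coeff]
    exact h d hd

lemma sum_rootMultiplicity_le_natDegree [IsDomain R] (p : R[X]) (s : Finset R) :
    ∑ b ∈ s, p.rootMultiplicity b ≤ p.natDegree := by
  classical
  calc ∑ b ∈ s, p.rootMultiplicity b = ∑ b ∈ s, p.roots.count b := by simp only [count_roots]
    _ ≤ ∑ b ∈ s ∪ p.roots.toFinset, p.roots.count b := sum_le_sum_of_subset subset_union_left
    _ = Multiset.card p.roots :=
        Multiset.sum_count_eq_card fun b hb => mem_union_right _ (Multiset.mem_toFinset.mpr hb)
    _ ≤ p.natDegree := card_roots' p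

end Polynomial

section Lex

variable {n : ℕ}

lemma Finsupp.apply_zero_le_of_toLex_le {x y : Fin (n + 1) →₀ ℕ} (h : toLex x ≤ toLex y) :
    x 0 ≤ y 0 :=
  Pi.apply_le_of_toLex (x := ⇑x) (y := ⇑y) h fun j hj => absurd hj (Fin.not_lt_zero j)

lemma Finsupp.toLex_le_of_toLex_cons_le_cons {t : ℕ} {x y : Fin n →₀ ℕ}
    (h : toLex (cons t x) ≤ toLex (cons t y)) : toLex x ≤ toLex y := by
  rcases le_iff_eq_or_lt.mp h with heq | hlt
  · rw [cons_right_injective t (toLex.injective heq)]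
  · have hlt' : Pi.Lex (· < ·) (· < ·) (Fin.cons t ⇑x : Fin (n + 1) → ℕ) (Fin.cons t ⇑y) := hlt
    rw [Fin.pi_lex_lt_cons_cons] at hlt'
    exact le_of_lt (hlt'.resolve_left (lt_irrefl t)).2

end Lex

section FinTuples

variable {n : ℕ}

lemma Fin.prod_univ_erase_zero {M : Type*} [CommMonoid M] (f : Fin (n + 1) → M) :
    ∏ k ∈ univ.erase 0, f k = ∏ k : Fin n, f k.succ := by
  rw [Fin.univ_succ, erase_cons, prod_map]
  rfl

lemma Fin.prod_univ_erase_succ {M : Type*} [CommMonoid M] (f : Fin (n + 1) → M) (j : Fin n) :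
    ∏ k ∈ univ.erase j.succ, f k = f 0 * ∏ k ∈ univ.erase j, f k.succ := by
  rw [Fin.univ_succ, erase_cons_of_ne _ (Fin.succ_ne_zero j).symm, Finset.prod_cons]
  change f 0 * ∏ k ∈ (univ.map (Fin.succEmb n)).erase (Fin.succEmb n j), f k = _
  rw [← map_erase, prod_map]
  rfl

lemma Fin.sum_mul_prod_erase_succ {R : Type*} [CommSemiring R] (c s : Fin (n + 1) → R) :
    ∑ j, c j * ∏ k ∈ univ.erase j, s k
      = s 0 * ∑ j : Fin n, c j.succ * ∏ k ∈ univ.erase j, s k.succ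
        + c 0 * ∏ j : Fin n, s j.succ := by
  simp only [Fin.sum_univ_succ (f := fun j => c j * _), Fin.prod_univ_erase_zero,
    Fin.prod_univ_erase_succ, mul_sum, mul_left_comm (s 0)]
  ring

lemma Fintype.sum_piFinset_succ {M α : Type*} [AddCommMonoid M]
    (S : Fin (n + 1) → Finset α) (f : (Fin (n + 1) → α) → M) :
    ∑ a ∈ piFinset S, f a = ∑ b ∈ S 0, ∑ a' ∈ piFinset (Fin.tail S), f (Fin.cons b a') := by
  have h := filter_piFinset_eq_map_consEquiv S (fun _ => True)
  simp only [filter_true] at h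
  rw [h, sum_map, sum_product]
  rfl

lemma Finsupp.cons_add_cons {M : Type*} [AddZeroClass M] (s t : M) (x y : Fin n →₀ M) :
    cons s x + cons t y = cons (s + t) (x + y) := by
  ext i
  refine Fin.cases ?_ (fun j => ?_) i <;> simp

lemma Finsupp.degree_cons (c : ℕ) (k : Fin n →₀ ℕ) : (cons c k).degree = c + k.degree := by
  simp [degree_eq_sum, Fin.sum_univ_succ]

end FinTuples

section FinSucc

variable {R : Type*} [CommRing R] {n : ℕ}

lemma coeff_finSuccEquiv_mvHasseDeriv_zero_cons (k : Fin n →₀ ℕ) (t : ℕ)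
    (F : MvPolynomial (Fin (n + 1)) R) :
    (finSuccEquiv R n (mvHasseDeriv (Finsupp.cons 0 k) F)).coeff t
      = mvHasseDeriv k ((finSuccEquiv R n F).coeff t) := by
  ext d
  rw [finSuccEquiv_coeff_coeff, coeff_mvHasseDeriv_of_support_subset (subset_univ _),
    coeff_mvHasseDeriv_of_support_subset (subset_univ _), finSuccEquiv_coeff_coeff,
    Finsupp.cons_add_cons, add_zero, Fin.prod_univ_succ]
  simp

lemma finSuccEquiv_mvHasseDeriv_cons_zero (j : ℕ) (F : MvPolynomial (Fin (n + 1)) R) :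
    finSuccEquiv R n (mvHasseDeriv (Finsupp.cons j 0) F)
      = Polynomial.hasseDeriv j (finSuccEquiv R n F) := by
  ext t d
  rw [finSuccEquiv_coeff_coeff, coeff_mvHasseDeriv_of_support_subset (subset_univ _),
    Polynomial.hasseDeriv_coeff, Finsupp.cons_add_cons, add_zero, ← C_eq_coe_nat, coeff_C_mul,
    finSuccEquiv_coeff_coeff, Fin.prod_univ_succ]
  simp [nsmul_eq_mul]

lemma le_rootMultiplicity_of_multGE_cons {G : MvPolynomial (Fin (n + 1)) R} {a' : Fin n → R}
    {b : R} {N : ℕ} (h : multGE G (Fin.cons b a') N)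
    (hg : (finSuccEquiv R n G).map (eval a') ≠ 0) :
    N ≤ ((finSuccEquiv R n G).map (eval a')).rootMultiplicity b :=
  Polynomial.le_rootMultiplicity_of_eval_hasseDeriv_eq_zero hg fun d hd => by
    rw [← Polynomial.hasseDeriv_map, ← finSuccEquiv_mvHasseDeriv_cons_zero,
      ← eval_eq_eval_mv_eval']
    exact h _ (by change (Finsupp.cons d 0).degree < N; simpa [Finsupp.degree_cons] using hd)

variable {F : MvPolynomial (Fin (n + 1)) R} {I : Fin (n + 1) →₀ ℕ}

lemma coeff_tail_coeff_finSuccEquiv :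
    ((finSuccEquiv R n F).coeff (I 0)).coeff I.tail = F.coeff I := by
  rw [finSuccEquiv_coeff_coeff, Finsupp.cons_tail]

lemma degreeOf_zero_le_of_toLex_le (hlead : ∀ d ∈ F.support, toLex d ≤ toLex I) :
    degreeOf 0 F ≤ I 0 :=
  degreeOf_le_iff.mpr fun d hd => Finsupp.apply_zero_le_of_toLex_le (hlead d hd)

lemma toLex_le_tail_of_mem_support_coeff_finSuccEquiv
    (hlead : ∀ d ∈ F.support, toLex d ≤ toLex I) :
    ∀ d ∈ ((finSuccEquiv R n F).coeff (I 0)).support, toLex d ≤ toLex I.tail := by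
  intro d hd
  rw [mem_support_iff, finSuccEquiv_coeff_coeff] at hd
  exact Finsupp.toLex_le_of_toLex_cons_le_cons (t := I 0)
    (by rw [Finsupp.cons_tail]; exact hlead _ (mem_support_iff.mpr hd))

end FinSucc

section Counting

variable {K : Type*} [CommRing K] [IsDomain K]

lemma sum_multAt_cons_le {n : ℕ} (s : Finset K) {F : MvPolynomial (Fin (n + 1)) K}
    {I : Fin (n + 1) →₀ ℕ} (hcoeff : F.coeff I ≠ 0)
    (hlead : ∀ d ∈ F.support, toLex d ≤ toLex I) (a' : Fin n → K) :
    ∑ b ∈ s, multAt F (Fin.cons b a')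
      ≤ #s * multAt ((finSuccEquiv K n F).coeff (I 0)) a' + I 0 := by
  set f := (finSuccEquiv K n F).coeff (I 0)
  obtain ⟨k, hk, hfk⟩ := exists_degree_le_multAt_eval_mvHasseDeriv_ne_zero
    (bddAbove_multGE_of_toLex_le (a := a') (coeff_tail_coeff_finSuccEquiv.trans_ne hcoeff)
      (toLex_le_tail_of_mem_support_coeff_finSuccEquiv hlead))
  set g := (finSuccEquiv K n (mvHasseDeriv (Finsupp.cons 0 k) F)).map (eval a')
  have hg_coeff : g.coeff (I 0) = eval a' (mvHasseDeriv k f) := by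
    rw [Polynomial.coeff_map, coeff_finSuccEquiv_mvHasseDeriv_zero_cons]
  have hg : g ≠ 0 := fun h0 => hfk (by rw [← hg_coeff, h0, Polynomial.coeff_zero])
  have hdeg : g.natDegree ≤ I 0 :=
    Polynomial.natDegree_map_le.trans <| (natDegree_finSuccEquiv _).trans_le <|
      (degreeOf_mvHasseDeriv_le 0 _ F).trans (degreeOf_zero_le_of_toLex_le hlead)
  have hpoint : ∀ b, multAt F (Fin.cons b a') ≤ k.degree + g.rootMultiplicity b := by
    intro b
    have hF := multGE_multAt (a := Fin.cons b a') (bddAbove_multGE_of_toLex_le hcoeff hlead)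
    have := le_rootMultiplicity_of_multGE_cons (hF.mvHasseDeriv (Finsupp.cons 0 k)) hg
    rw [Finsupp.degree_cons, zero_add] at this
    exact Nat.sub_le_iff_le_add'.mp this
  calc ∑ b ∈ s, multAt F (Fin.cons b a')
      ≤ ∑ b ∈ s, (k.degree + g.rootMultiplicity b) := sum_le_sum fun b _ => hpoint b
    _ = #s * k.degree + ∑ b ∈ s, g.rootMultiplicity b := by
        rw [sum_add_distrib, sum_const, smul_eq_mul]
    _ ≤ #s * multAt f a' + I 0 :=
        add_le_add (Nat.mul_le_mul_left _ hk) ((g.sum_rootMultiplicity_le_natDegree s).trans hdeg)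

lemma sum_multAt_piFinset_le {n : ℕ} (S : Fin n → Finset K) {F : MvPolynomial (Fin n) K}
    {I : Fin n →₀ ℕ} (hcoeff : F.coeff I ≠ 0) (hlead : ∀ d ∈ F.support, toLex d ≤ toLex I) :
    ∑ a ∈ Fintype.piFinset S, multAt F a ≤ ∑ j, I j * ∏ k ∈ univ.erase j, #(S k) := by
  induction n with
  | zero =>
    rw [univ_eq_empty, sum_empty, Nat.le_zero]
    refine sum_eq_zero fun a _ => Nat.le_zero.mp ?_
    simpa [Subsingleton.elim I 0] using (multGE_multAt
      (bddAbove_multGE_of_toLex_le (a := a) hcoeff hlead)).le_degree_of_toLex_le hcoeff hlead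
  | succ n ih =>
    set f := (finSuccEquiv K n F).coeff (I 0)
    calc ∑ a ∈ Fintype.piFinset S, multAt F a
        = ∑ a' ∈ Fintype.piFinset (Fin.tail S), ∑ b ∈ S 0, multAt F (Fin.cons b a') := by
          rw [Fintype.sum_piFinset_succ, sum_comm]
      _ ≤ ∑ a' ∈ Fintype.piFinset (Fin.tail S), (#(S 0) * multAt f a' + I 0) :=
          sum_le_sum fun a' _ => sum_multAt_cons_le (S 0) hcoeff hlead a'
      _ = #(S 0) * ∑ a' ∈ Fintype.piFinset (Fin.tail S), multAt f a'
            + I 0 * ∏ j : Fin n, #(S j.succ) := by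
          rw [sum_add_distrib, ← mul_sum, sum_const, Fintype.card_piFinset, smul_eq_mul,
            mul_comm _ (I 0)]
          rfl
      _ ≤ #(S 0) * ∑ j : Fin n, I j.succ * ∏ k ∈ univ.erase j, #(S k.succ)
            + I 0 * ∏ j : Fin n, #(S j.succ) := by
          gcongr
          exact ih (Fin.tail S) (coeff_tail_coeff_finSuccEquiv.trans_ne hcoeff)
            (toLex_le_tail_of_mem_support_coeff_finSuccEquiv hlead)
      _ = ∑ j, I j * ∏ k ∈ univ.erase j, #(S k) :=
          (Fin.sum_mul_prod_erase_succ I fun k => #(S k)).symm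

end Counting

/-- if the leading monomial of a nonzero polynomial `F` with respect to
the lexicographic ordering is `X_1^{i_1}⋯X_m^{i_m}` and `r ≥ 1`, then the number of
points of `S_1 × ⋯ × S_m` at which `F` has multiplicity at least `r` is at most
`(i_1 s_2⋯s_m + s_1 i_2 s_3⋯s_m + ⋯ + s_1⋯s_{m−1} i_m)/r`. -/
theorem zeros_mult_r_lex_bound {m : ℕ} {K : Type*} [Field K]
    (S : Fin m → Finset K) (F : MvPolynomial (Fin m) K) (I : Fin m →₀ ℕ) (r : ℕ)
    (hr : 1 ≤ r) (hcoeff : F.coeff I ≠ 0)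
    (hlead : ∀ d ∈ F.support, toLex d ≤ toLex I) :
    (((Fintype.piFinset S).filter (fun a => multGE F a r)).card : ℝ)
      ≤ (∑ j : Fin m, I j * ∏ k ∈ Finset.univ.erase j, (S k).card : ℕ) / r := by
  rw [le_div_iff₀ (by exact_mod_cast hr)]
  exact_mod_cast (card_filter_multGE_mul_le_sum_multAt _
    (fun _ _ => bddAbove_multGE_of_toLex_le hcoeff hlead) r).trans
    (sum_multAt_piFinset_le S hcoeff hlead)
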